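/- Let G be a finite group and let X, Y, Z, W be finite left G-sets such that (X×Z) ⊔ (Y×W) ≅ pt ⊔ (X×W) ⊔ (Y×Z) as G-sets (products with diagonal G-action, pt a one-point G-set); i.e., ([X] − [Y])·([Z] − [W]) = 1 in the Burnside ring B(G), so that u = [X] − [Y] is a unit of B(G). Then (X×X) ⊔ (Y×Y) ≅ pt ⊔ (X×Y) ⊔ (Y×X) as G-sets; i.e., u² = 1. (Hence the unit group B(G)^× is an elementary abelian 2-group.) -/

import Mathlib

open MulAction

/-- An isomorphism of `M`-sets: an equivariant bijection. -/
def IsoAsGSets (M X Y : Type*) [SMul M X] [SMul M Y] : Prop :=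
  ∃ e : X ≃ Y, ∀ (m : M) (x : X), e (m • x) = m • e x

/-- The twisted diagonal subgroup `Δ(R,α,S) = {(α s, s) | s ∈ S}` of `G × H`,
for an isomorphism `α : S ≃* R`. -/
def twistedDiagonal {G H : Type*} [Group G] [Group H] (R : Subgroup G) (S : Subgroup H)
    (α : S ≃* R) : Subgroup (G × H) :=
  ((R.subtype.comp α.toMonoidHom).prod S.subtype).range

/-- `Δ(G,φ,H) = {(φ h, h) | h ∈ H} ≤ G × H` for an isomorphism `φ : H ≃* G`. -/
def fullTwistedDiagonal {G H : Type*} [Group G] [Group H] (φ : H ≃* G) : Subgroup (G × H) :=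
  (φ.toMonoidHom.prod (MonoidHom.id H)).range

/-- The diagonal subgroup `Δ(R) = {(r,r) | r ∈ R} ≤ G × G`. -/
def diagSubgroup {G : Type*} [Group G] (R : Subgroup G) : Subgroup (G × G) :=
  (R.subtype.prod R.subtype).range

/-- A `(G,H)`-biset (i.e. a left `(G × H)`-set) is bifree if it is free as a left `G`-set
and free as a right `H`-set. -/
def IsBifree (G H X : Type*) [Group G] [Group H] [MulAction (G × H) X] : Prop :=
  (∀ (g : G) (x : X), (g, (1 : H)) • x = x → g = 1) ∧
  (∀ (h : H) (x : X), ((1 : G), h) • x = x → h = 1)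

section Tensor

variable (G H K : Type*) [Group G] [Group H] [Group K]
variable (X Y : Type*) [MulAction (G × H) X] [MulAction (H × K) Y]

/-- The relation on `X × Y` identifying `(x·h, y)` with `(x, h·y)`. -/
def bisetSetoid : Setoid (X × Y) where
  r p q := ∃ h : H, q.1 = ((1 : G), h) • p.1 ∧ q.2 = (h, (1 : K)) • p.2
  iseqv := by
    constructor
    · intro p
      exact ⟨1, by simp [Prod.mk_one_one], by simp [Prod.mk_one_one]⟩
    · rintro p q ⟨h, h1, h2⟩
      exact ⟨h⁻¹, by simp [h1, smul_smul, Prod.mk_one_one], by simp [h2, smul_smul, Prod.mk_one_one]⟩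
    · rintro p q r ⟨h, h1, h2⟩ ⟨h', h1', h2'⟩
      exact ⟨h' * h, by simp [h1, h1', smul_smul], by simp [h2, h2', smul_smul]⟩

/-- The tensor product `X ×_H Y` of a `(G,H)`-biset and an `(H,K)`-biset;
a `(G,K)`-biset. -/
def BisetTensor : Type _ :=
  Quotient (bisetSetoid G H K X Y)

variable {G H K X Y}

/-- The class of `(x, y)` in `X ×_H Y`. -/
def BisetTensor.mk (p : X × Y) : BisetTensor G H K X Y :=
  Quotient.mk (bisetSetoid G H K X Y) p

variable (G H K X Y)

instance : SMul (G × K) (BisetTensor G H K X Y) :=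
  ⟨fun a => Quotient.map (fun p => ((a.1, (1 : H)) • p.1, ((1 : H), a.2) • p.2))
    (by
      rintro p q ⟨h, h1, h2⟩
      exact ⟨h, by simp [h1, smul_smul], by simp [h2, smul_smul]⟩)⟩

variable {G H K X Y}

theorem BisetTensor.smul_mk (a : G × K) (p : X × Y) :
    a • (BisetTensor.mk p : BisetTensor G H K X Y) =
      BisetTensor.mk ((a.1, (1 : H)) • p.1, ((1 : H), a.2) • p.2) :=
  rfl

variable (G H K X Y)

instance : MulAction (G × K) (BisetTensor G H K X Y) where
  one_smul q := Quotient.inductionOn q fun p => by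
    refine Quotient.sound ⟨1, ?_, ?_⟩ <;> simp [Prod.mk_one_one]
  mul_smul a b q := Quotient.inductionOn q fun p => by
    refine Quotient.sound ⟨1, ?_, ?_⟩ <;> simp [smul_smul, Prod.mk_one_one]

end Tensor

section Op

/-- The opposite biset: a `(G,H)`-biset viewed as an `(H,G)`-biset via
`h · x · g := g⁻¹ · x · h⁻¹`. -/
def BisetOp (H G X : Type*) : Type _ := (fun _ _ => X) H G

instance BisetOp.instMulAction {G H : Type*} [Group G] [Group H] (X : Type*)
    [MulAction (G × H) X] : MulAction (H × G) (BisetOp H G X) :=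
  MulAction.compHom X (MulEquiv.prodComm : H × G ≃* G × H).toMonoidHom

instance BisetOp.instFinite {G H : Type*} (X : Type*) [Finite X] : Finite (BisetOp H G X) :=
  inferInstanceAs (Finite X)

end Op

section Grp

/-- The group `G` viewed as a `(G,G)`-biset via left and right multiplication. -/
structure BisetGrp (G : Type*) where
  /-- the underlying group element -/
  val : G

instance BisetGrp.instSMul {G : Type*} [Group G] : SMul (G × G) (BisetGrp G) :=
  ⟨fun p x => ⟨p.1 * x.val * p.2⁻¹⟩⟩

theorem BisetGrp.smul_def {G : Type*} [Group G] (p : G × G) (x : BisetGrp G) :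
    p • x = ⟨p.1 * x.val * p.2⁻¹⟩ := rfl

instance BisetGrp.instMulAction {G : Type*} [Group G] : MulAction (G × G) (BisetGrp G) where
  one_smul x := by
    cases x
    simp [BisetGrp.smul_def]
  mul_smul p q x := by
    cases x
    simp [BisetGrp.smul_def, mul_assoc]

instance BisetGrp.instFinite {G : Type*} [Finite G] : Finite (BisetGrp G) :=
  Finite.of_equiv G ⟨fun g => ⟨g⟩, fun x => x.val, fun _ => rfl, fun _ => rfl⟩

end Grp

/-- A pair `(X,Y)` of `(G,H)`-bisets is an orthogonal pair if
`(X ×_H X°) ⊔ (Y ×_H Y°) ≅ G ⊔ (X ×_H Y°) ⊔ (Y ×_H X°)` as `(G,G)`-bisets;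
this encodes the equation `([X] - [Y]) ·_H ([X] - [Y])° = [G]` in `B^Δ(G,G)`. -/
def IsOrthogonalPair (G H : Type*) [Group G] [Group H] (X Y : Type*)
    [MulAction (G × H) X] [MulAction (G × H) Y] : Prop :=
  IsoAsGSets (G × G)
    (BisetTensor G H G X (BisetOp H G X) ⊕ BisetTensor G H G Y (BisetOp H G Y))
    (BisetGrp G ⊕ (BisetTensor G H G X (BisetOp H G Y) ⊕ BisetTensor G H G Y (BisetOp H G X)))

section Iota

/-- For a `G`-set `Z`, the `(G,G)`-biset `ι(Z) = G × Z` with action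
`(g₁,g₂) • (g,z) = (g₁ g g₂⁻¹, g₂ • z)`. -/
structure IotaBiset (G Z : Type*) where
  /-- the group component -/
  fst : G
  /-- the `G`-set component -/
  snd : Z

instance IotaBiset.instSMul {G Z : Type*} [Group G] [MulAction G Z] :
    SMul (G × G) (IotaBiset G Z) :=
  ⟨fun p x => ⟨p.1 * x.fst * p.2⁻¹, p.2 • x.snd⟩⟩

theorem IotaBiset.smul_def {G Z : Type*} [Group G] [MulAction G Z] (p : G × G)
    (x : IotaBiset G Z) : p • x = ⟨p.1 * x.fst * p.2⁻¹, p.2 • x.snd⟩ := rfl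

instance IotaBiset.instMulAction {G Z : Type*} [Group G] [MulAction G Z] :
    MulAction (G × G) (IotaBiset G Z) where
  one_smul x := by
    cases x
    simp [IotaBiset.smul_def]
  mul_smul p q x := by
    cases x
    simp [IotaBiset.smul_def, mul_assoc, mul_smul]

instance IotaBiset.instFinite {G Z : Type*} [Finite G] [Finite Z] : Finite (IotaBiset G Z) :=
  Finite.of_equiv (G × Z) ⟨fun p => ⟨p.1, p.2⟩, fun x => (x.fst, x.snd), fun _ => rfl,
    fun _ => rfl⟩

end Iota

/-!
By Burnside's theorem on marks, finite `G`-sets are isomorphic as soon as they have the same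
number of `H`-fixed points for every subgroup `H`. Marks turn `⊔` and `×` into `+` and `·`, so
at each `H` the marks `x, y, z, w` of `X, Y, Z, W` satisfy `(x - y)(z - w) = 1` in `ℤ`; hence
`x - y = ±1` and `(x - y)² = 1`, which is the mark identity of the claimed isomorphism.

The marks theorem goes by induction on `|A|`: a point `a ∈ A` with maximal stabilizer has a
partner `b ∈ B` with the same stabilizer, the orbits of `a` and `b` are then isomorphic, and
their complements again have equal marks.
-/

namespace IsoAsGSets

variable {M A B C : Type*} [SMul M A] [SMul M B] [SMul M C]

theorem symm (h : IsoAsGSets M A B) : IsoAsGSets M B A := by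
  obtain ⟨e, he⟩ := h
  exact ⟨e.symm, fun m y => e.injective <| by
    rw [he, Equiv.apply_symm_apply, Equiv.apply_symm_apply]⟩

theorem trans (h₁ : IsoAsGSets M A B) (h₂ : IsoAsGSets M B C) : IsoAsGSets M A C := by
  obtain ⟨e₁, he₁⟩ := h₁
  obtain ⟨e₂, he₂⟩ := h₂
  exact ⟨e₁.trans e₂, fun m x => by simp only [Equiv.trans_apply, he₁, he₂]⟩

theorem sumCongr {A' B' : Type*} [SMul M A'] [SMul M B'] (h : IsoAsGSets M A B)
    (h' : IsoAsGSets M A' B') : IsoAsGSets M (A ⊕ A') (B ⊕ B') := by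
  obtain ⟨e, he⟩ := h
  obtain ⟨e', he'⟩ := h'
  refine ⟨e.sumCongr e', fun m x => ?_⟩
  rcases x with a | a' <;> simp [Sum.smul_inl, Sum.smul_inr, he, he']

theorem subgroup {G : Type*} [Group G] [MulAction G A] [MulAction G B] (h : IsoAsGSets G A B)
    (H : Subgroup G) : IsoAsGSets H A B := by
  obtain ⟨e, he⟩ := h
  exact ⟨e, fun k x => he k x⟩

theorem card_fixedPoints_eq [Monoid M] {A B : Type*} [MulAction M A] [MulAction M B]
    (h : IsoAsGSets M A B) : Nat.card (fixedPoints M A) = Nat.card (fixedPoints M B) := by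
  obtain ⟨e, he⟩ := h
  refine Nat.card_congr (e.subtypeEquiv fun a => ?_)
  simp only [mem_fixedPoints, ← he, e.apply_eq_iff_eq]

end IsoAsGSets

section FixedPoints

variable {M A B : Type*} [Monoid M] [MulAction M A] [MulAction M B]

theorem card_fixedPoints_sum [Finite A] [Finite B] :
    Nat.card (fixedPoints M (A ⊕ B)) =
      Nat.card (fixedPoints M A) + Nat.card (fixedPoints M B) := by
  rw [← Nat.card_sum]
  refine Nat.card_congr (Equiv.subtypeSum.trans (Equiv.sumCongr
    (Equiv.subtypeEquivRight fun a => ?_) (Equiv.subtypeEquivRight fun b => ?_))) <;>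
  simp only [mem_fixedPoints, Sum.smul_inl, Sum.smul_inr, Sum.inl.injEq, Sum.inr.injEq]

theorem card_fixedPoints_prod :
    Nat.card (fixedPoints M (A × B)) =
      Nat.card (fixedPoints M A) * Nat.card (fixedPoints M B) := by
  rw [← Nat.card_prod]
  refine Nat.card_congr ((Equiv.subtypeEquivRight fun p => ?_).trans
    (Equiv.subtypeProdEquivProd (p := (· ∈ fixedPoints M A)) (q := (· ∈ fixedPoints M B))))
  simp only [mem_fixedPoints, Prod.ext_iff, Prod.smul_fst, Prod.smul_snd, forall_and]

theorem card_fixedPoints_punit : Nat.card (fixedPoints M PUnit) = 1 :=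
  Nat.card_eq_one_iff_unique.mpr ⟨inferInstance, ⟨⟨PUnit.unit, fun _ => rfl⟩⟩⟩

end FixedPoints

section Orbits

variable {G A B : Type*} [Group G] [MulAction G A] [MulAction G B]

theorem isoAsGSets_orbit_quotient_stabilizer (a : A) :
    IsoAsGSets G (orbit G a) (G ⧸ stabilizer G a) :=
  IsoAsGSets.symm ⟨(orbitEquivQuotientStabilizer G a).symm,
    fun g q => Subtype.ext (ofQuotientStabilizer_smul G a g q)⟩

theorem isoAsGSets_orbit_of_stabilizer_eq {a : A} {b : B}
    (h : stabilizer G a = stabilizer G b) : IsoAsGSets G (orbit G a) (orbit G b) :=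
  (isoAsGSets_orbit_quotient_stabilizer a).trans
    (h ▸ (isoAsGSets_orbit_quotient_stabilizer b).symm)

variable (G) in
def SubMulAction.orbit (a : A) : SubMulAction G A where
  carrier := MulAction.orbit G a
  smul_mem' g _ := by
    rintro ⟨k, rfl⟩
    exact ⟨g * k, mul_smul g k a⟩

theorem SubMulAction.isoAsGSets_sum_compl (p : SubMulAction G A) :
    IsoAsGSets G A (p ⊕ ↥pᶜ) := by
  classical
  refine ⟨(Equiv.sumCompl (· ∈ p)).symm, fun g x => ?_⟩
  by_cases hx : x ∈ p
  · have hgx : g • x ∈ p := p.smul_mem g hx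
    rw [Equiv.sumCompl_symm_apply_of_pos hgx, Equiv.sumCompl_symm_apply_of_pos hx]
    rfl
  · have hgx : g • x ∉ p := by rwa [SubMulAction.smul_mem_iff']
    rw [Equiv.sumCompl_symm_apply_of_neg hgx, Equiv.sumCompl_symm_apply_of_neg hx]
    rfl

end Orbits

section Marks

variable {G A B : Type*} [Group G] [MulAction G A] [MulAction G B]

theorem mem_fixedPoints_subgroup_iff_le_stabilizer {H : Subgroup G} {a : A} :
    a ∈ fixedPoints H A ↔ H ≤ stabilizer G a :=
  mem_fixedPoints.trans ⟨fun h g hg => h ⟨g, hg⟩, fun h g => h g.2⟩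

variable [Finite A] [Finite B]

theorem exists_le_stabilizer_iff_of_card_fixedPoints_eq
    (hmarks : ∀ H : Subgroup G, Nat.card (fixedPoints H A) = Nat.card (fixedPoints H B))
    (H : Subgroup G) : (∃ a : A, H ≤ stabilizer G a) ↔ ∃ b : B, H ≤ stabilizer G b := by
  simp only [← mem_fixedPoints_subgroup_iff_le_stabilizer, ← Set.nonempty_def,
    ← Set.nonempty_coe_sort, ← Finite.card_pos_iff, hmarks]

theorem exists_stabilizer_eq_of_card_fixedPoints_eq [Nonempty A]
    (hmarks : ∀ H : Subgroup G, Nat.card (fixedPoints H A) = Nat.card (fixedPoints H B)) :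
    ∃ (a : A) (b : B), stabilizer G a = stabilizer G b := by
  obtain ⟨a, -, ha⟩ :=
    Set.finite_univ.exists_maximalFor (stabilizer G : A → _) Set.univ Set.univ_nonempty
  have hiff := exists_le_stabilizer_iff_of_card_fixedPoints_eq hmarks
  obtain ⟨b, hab⟩ := (hiff _).mp ⟨a, le_rfl⟩
  obtain ⟨a', hba'⟩ := (hiff _).mpr ⟨b, le_rfl⟩
  exact ⟨a, b, hab.antisymm (hba'.trans (ha trivial (hab.trans hba')))⟩

end Marks

theorem isoAsGSets_of_card_fixedPoints_eq {G A B : Type*} [Group G] [MulAction G A]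
    [MulAction G B] [Finite A] [Finite B]
    (hmarks : ∀ H : Subgroup G, Nat.card (fixedPoints H A) = Nat.card (fixedPoints H B)) :
    IsoAsGSets G A B := by
  induction hn : Nat.card A using Nat.strong_induction_on generalizing A B with
  | _ n ih =>
  rcases isEmpty_or_nonempty A with hA | hA
  · have : IsEmpty B := by
      by_contra! hB
      obtain ⟨-, a, -⟩ :=
        exists_stabilizer_eq_of_card_fixedPoints_eq fun H => (hmarks H).symm
      exact hA.false a
    exact ⟨Equiv.equivOfIsEmpty A B, fun _ x => isEmptyElim x⟩
  obtain ⟨a, b, hab⟩ := exists_stabilizer_eq_of_card_fixedPoints_eq hmarks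
  set O := SubMulAction.orbit G a
  set O' := SubMulAction.orbit G b
  have hAO : IsoAsGSets G A (O ⊕ ↥Oᶜ) := O.isoAsGSets_sum_compl
  have hBO' : IsoAsGSets G B (O' ⊕ ↥O'ᶜ) := O'.isoAsGSets_sum_compl
  have hOO' : IsoAsGSets G O O' := isoAsGSets_orbit_of_stabilizer_eq hab
  have hcard : Nat.card ↥Oᶜ < n := by
    obtain ⟨e, -⟩ := hAO
    have : Nonempty O := ⟨⟨a, mem_orbit_self a⟩⟩
    rw [← hn, Nat.card_congr e, Nat.card_sum]
    exact Nat.lt_add_of_pos_left Nat.card_pos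
  have hcompl : IsoAsGSets G ↥Oᶜ ↥O'ᶜ := by
    refine ih _ hcard (fun H => ?_) rfl
    have hA := (hAO.subgroup H).card_fixedPoints_eq
    have hB := (hBO'.subgroup H).card_fixedPoints_eq
    have hO := (hOO'.subgroup H).card_fixedPoints_eq
    rw [card_fixedPoints_sum] at hA hB
    have := hmarks H
    omega
  exact hAO.trans ((hOO'.sumCongr hcompl).trans hBO'.symm)

theorem mul_self_add_mul_self_eq_of_mul_add_mul_eq {x y z w : ℕ}
    (h : x * z + y * w = 1 + (x * w + y * z)) : x * x + y * y = 1 + (x * y + y * x) := by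
  have hz : (x * z + y * w : ℤ) = 1 + (x * w + y * z) := by exact_mod_cast h
  have hunit : ((x : ℤ) - y) * ((z : ℤ) - w) = 1 := by linear_combination hz
  have hsq : ((x : ℤ) - y) * ((x : ℤ) - y) = 1 := by
    rcases Int.eq_one_or_neg_one_of_mul_eq_one' hunit with ⟨hxy, -⟩ | ⟨hxy, -⟩ <;>
      rw [hxy] <;> norm_num
  have : (x * x + y * y : ℤ) = 1 + (x * y + y * x) := by linear_combination hsq
  exact_mod_cast this

theorem statement19_general {G : Type*} [Group G]
    (X Y Z W : Type*) [MulAction G X] [MulAction G Y] [MulAction G Z] [MulAction G W]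
    [Finite X] [Finite Y] [Finite Z] [Finite W]
    (h : IsoAsGSets G ((X × Z) ⊕ (Y × W)) (PUnit ⊕ ((X × W) ⊕ (Y × Z)))) :
    IsoAsGSets G ((X × X) ⊕ (Y × Y)) (PUnit ⊕ ((X × Y) ⊕ (Y × X))) := by
  refine isoAsGSets_of_card_fixedPoints_eq fun H => ?_
  have hmarks := (h.subgroup H).card_fixedPoints_eq
  simp only [card_fixedPoints_sum, card_fixedPoints_prod, card_fixedPoints_punit] at hmarks ⊢
  exact mul_self_add_mul_self_eq_of_mul_add_mul_eq hmarks

/-- if `u = [X] - [Y]` is a unit of the Burnside ring `B(G)`, with inverse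
`[Z] - [W]`, then `u² = 1`; expressed via `G`-set isomorphisms. Hence `B(G)^×` is an
elementary abelian `2`-group. -/
theorem statement19 {G : Type*} [Group G] [Finite G]
    (X Y Z W : Type*) [MulAction G X] [MulAction G Y] [MulAction G Z] [MulAction G W]
    [Finite X] [Finite Y] [Finite Z] [Finite W]
    (h : IsoAsGSets G ((X × Z) ⊕ (Y × W)) (PUnit ⊕ ((X × W) ⊕ (Y × Z)))) :
    IsoAsGSets G ((X × X) ⊕ (Y × Y)) (PUnit ⊕ ((X × Y) ⊕ (Y × X))) :=
  statement19_general X Y Z W h
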